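/- arXiv:1410.3035 — 9 statements merged into one kernel-verified Lean document; each statement's English description precedes it below -/
import Mathlib

section
/- Let a_{12}, a_{13}, a_{14}, a_{23}, a_{34} and a°_{12}, a°_{13}, a°_{14}, a°_{23}, a°_{34} be real numbers. Define a_{24} = max(a_{12}+a_{34}, a_{14}+a_{23}) − a_{13} and a°_{24} = max(a°_{12}+a°_{34}, a°_{14}+a°_{23}) − a°_{13}, set b_{ij} = a°_{ij} − a_{ij} for each index pair ij ∈ {12,13,14,23,24,34}, and set x_{13} = a_{12} + a_{34} − a_{14} − a_{23}. Then b_{24} = max(x_{13} + b_{12} + b_{34}, b_{14} + b_{23}) − max(0, x_{13}) − b_{13}. -/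
/-- Transformation rule for the `b`-coordinates of a `D`-lamination under a flip:
with half intersection numbers `a`, `a°`, the tropical Ptolemy relation
`a24 = max (a12 + a34) (a14 + a23) − a13` (and likewise for `a°`), `bij = a°ij − aij`,
and the tropical cross ratio `x13 = a12 + a34 − a14 − a23`, one has
`b24 = max (x13 + b12 + b34) (b14 + b23) − max 0 x13 − b13`. -/
theorem D_lamination_b_flip
    (a12 a13 a14 a23 a34 a12o a13o a14o a23o a34o : ℝ)
    (a24 a24o b12 b13 b14 b23 b24 b34 x13 : ℝ)
    (ha24 : a24 = max (a12 + a34) (a14 + a23) - a13)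
    (ha24o : a24o = max (a12o + a34o) (a14o + a23o) - a13o)
    (hb12 : b12 = a12o - a12) (hb13 : b13 = a13o - a13) (hb14 : b14 = a14o - a14)
    (hb23 : b23 = a23o - a23) (hb24 : b24 = a24o - a24) (hb34 : b34 = a34o - a34)
    (hx13 : x13 = a12 + a34 - a14 - a23) :
    b24 = max (x13 + b12 + b34) (b14 + b23) - max 0 x13 - b13 := by
  have e1 : max (x13 + b12 + b34) (b14 + b23)
      = max (a12o + a34o) (a14o + a23o) - (a14 + a23) := by
    rw [← max_sub_sub_right]
    congr 1 <;> simp only [hx13, hb12, hb34, hb14, hb23] <;> ring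
  have e2 : max 0 x13 = max (a12 + a34) (a14 + a23) - (a14 + a23) := by
    rw [max_comm, ← max_sub_sub_right]
    congr 1 <;> (try rw [hx13]) <;> ring
  rw [e1, e2, hb24, ha24, ha24o, hb13]
  ring
end

section
/- For all real numbers x_i, x_k and every integer e, the function C ↦ (1/C)·log( exp(C·x_i) · (1 + exp(−C·sgn(e)·x_k))^{−e} ) tends to x_i − e·max(0, −sgn(e)·x_k) as the real parameter C tends to +∞, where sgn(e) ∈ {−1,0,1} and the power is an integer power. -/
open Filter Real

lemma trop_aux (a : ℝ) :
    Tendsto (fun C : ℝ => Real.log (1 + Real.exp (C * a)) / C) atTop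
      (nhds (max 0 a)) := by
  have hlow : ∀ᶠ C : ℝ in atTop, max 0 a ≤ Real.log (1 + Real.exp (C * a)) / C := by
    filter_upwards [eventually_gt_atTop (0 : ℝ)] with C hC
    have h1 : max 0 a * C = max 0 (C * a) := by
      rw [max_mul_of_nonneg _ _ hC.le]; simp [mul_comm]
    rw [le_div_iff₀ hC, h1]
    rcases le_total (C * a) 0 with h | h
    · rw [max_eq_left h]
      have := Real.exp_pos (C * a)
      have : (1 : ℝ) ≤ 1 + Real.exp (C * a) := by linarith
      have := Real.log_le_log (by norm_num) this
      simpa using this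
    · rw [max_eq_right h]
      calc C * a ≤ Real.log (Real.exp (C * a)) := by rw [Real.log_exp]
        _ ≤ Real.log (1 + Real.exp (C * a)) :=
          Real.log_le_log (Real.exp_pos _) (by linarith)
  have hhigh : ∀ᶠ C : ℝ in atTop,
      Real.log (1 + Real.exp (C * a)) / C ≤ max 0 a + Real.log 2 / C := by
    filter_upwards [eventually_gt_atTop (0 : ℝ)] with C hC
    have h1 : max 0 a * C = max 0 (C * a) := by
      rw [max_mul_of_nonneg _ _ hC.le]; simp [mul_comm]
    rw [div_le_iff₀ hC, add_mul, h1, div_mul_cancel₀ _ hC.ne']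
    have hle : 1 + Real.exp (C * a) ≤ 2 * Real.exp (max 0 (C * a)) := by
      have h2 : (1 : ℝ) ≤ Real.exp (max 0 (C * a)) := by
        rw [Real.one_le_exp_iff]; exact le_max_left _ _
      have h3 : Real.exp (C * a) ≤ Real.exp (max 0 (C * a)) :=
        Real.exp_le_exp.2 (le_max_right _ _)
      linarith
    calc Real.log (1 + Real.exp (C * a)) ≤ Real.log (2 * Real.exp (max 0 (C * a))) :=
          Real.log_le_log (by positivity) hle
      _ = Real.log 2 + max 0 (C * a) := by
          rw [Real.log_mul (by norm_num) (Real.exp_ne_zero _), Real.log_exp]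
      _ = max 0 (C * a) + Real.log 2 := by ring
  have hconst : Tendsto (fun _ : ℝ => max 0 a) atTop (nhds (max 0 a)) := tendsto_const_nhds
  have hub : Tendsto (fun C : ℝ => max 0 a + Real.log 2 / C) atTop (nhds (max 0 a)) := by
    have : Tendsto (fun C : ℝ => Real.log 2 / C) atTop (nhds 0) :=
      tendsto_const_nhds.div_atTop tendsto_id
    simpa using hconst.add this
  exact tendsto_of_tendsto_of_tendsto_of_le_of_le' hconst hub hlow hhigh

/-- Tropicalization of the `X`-coordinate mutation rule: for reals `xi, xk` and an
integer `e`, the function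
`C ↦ (1/C) · log (exp (C·xi) · (1 + exp (−C·sgn e·xk))^(−e))`
tends to `xi − e · max 0 (−sgn e · xk)` as `C → +∞`. -/
theorem tropicalization_X_mutation (xi xk : ℝ) (e : ℤ) :
    Tendsto (fun C : ℝ => (1 / C) * Real.log (Real.exp (C * xi) *
      (1 + Real.exp (-C * (e.sign : ℝ) * xk)) ^ (-e))) atTop
      (nhds (xi - (e : ℝ) * max 0 (-(e.sign : ℝ) * xk))) := by
  set a : ℝ := -(e.sign : ℝ) * xk with ha
  have key : Tendsto (fun C : ℝ => xi + (-e : ℝ) * (Real.log (1 + Real.exp (C * a)) / C))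
      atTop (nhds (xi + (-e : ℝ) * max 0 a)) :=
    tendsto_const_nhds.add (tendsto_const_nhds.mul (trop_aux a))
  have heq : ∀ᶠ C : ℝ in atTop,
      xi + (-e : ℝ) * (Real.log (1 + Real.exp (C * a)) / C) =
      (1 / C) * Real.log (Real.exp (C * xi) *
        (1 + Real.exp (-C * (e.sign : ℝ) * xk)) ^ (-e)) := by
    filter_upwards [eventually_gt_atTop (0 : ℝ)] with C hC
    have hpos : (0 : ℝ) < 1 + Real.exp (-C * (e.sign : ℝ) * xk) := by positivity
    rw [Real.log_mul (Real.exp_ne_zero _) (zpow_ne_zero _ hpos.ne'), Real.log_exp,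
      Real.log_zpow]
    have harg : -C * (e.sign : ℝ) * xk = C * a := by rw [ha]; ring
    rw [harg]
    push_cast
    field_simp
  have := key.congr' heq
  convert this using 2
  ring_nf
end

section
/- Let J be a finite set, let ε_j (j ∈ J) be integers, let b_j (j ∈ J) be real numbers, and let x and b be real numbers. Then the function C ↦ (1/C)·log( ( exp(C·x)·∏_{j : ε_j > 0} exp(C·ε_j·b_j) + ∏_{j : ε_j < 0} exp(−C·ε_j·b_j) ) / ( (1 + exp(C·x))·exp(C·b) ) ) tends to max( x + Σ_{j : ε_j > 0} ε_j·b_j , −Σ_{j : ε_j < 0} ε_j·b_j ) − max(0, x) − b as the real parameter C tends to +∞. -/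
open Filter Real

lemma aux_max_trop (a b : ℝ) :
    Tendsto (fun C : ℝ => (1/C) * Real.log (Real.exp (C*a) + Real.exp (C*b))) atTop
      (nhds (max a b)) := by
  have h2 : Tendsto (fun C : ℝ => Real.log 2 / C) atTop (nhds 0) :=
    Tendsto.div_atTop (tendsto_const_nhds : Tendsto (fun _ : ℝ => Real.log 2) atTop _) tendsto_id
  have h1 : Tendsto (fun C : ℝ => max a b + Real.log 2 / C) atTop (nhds (max a b)) := by
    simpa using tendsto_const_nhds.add h2
  refine tendsto_of_tendsto_of_tendsto_of_le_of_le'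
    (tendsto_const_nhds : Tendsto (fun _ : ℝ => max a b) atTop (nhds (max a b))) h1 ?_ ?_
  · filter_upwards [eventually_gt_atTop (0:ℝ)] with C hC
    have hle : Real.exp (C * max a b) ≤ Real.exp (C*a) + Real.exp (C*b) := by
      rcases max_cases a b with ⟨h, _⟩ | ⟨h, _⟩ <;> rw [h]
      · exact le_add_of_nonneg_right (Real.exp_pos _).le
      · exact le_add_of_nonneg_left (Real.exp_pos _).le
    have hlog : C * max a b ≤ Real.log (Real.exp (C*a) + Real.exp (C*b)) := by
      calc C * max a b = Real.log (Real.exp (C * max a b)) := (Real.log_exp _).symm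
      _ ≤ _ := Real.log_le_log (Real.exp_pos _) hle
    calc max a b = (1/C) * (C * max a b) := by field_simp
    _ ≤ _ := mul_le_mul_of_nonneg_left hlog (by positivity)
  · filter_upwards [eventually_gt_atTop (0:ℝ)] with C hC
    have hle : Real.exp (C*a) + Real.exp (C*b) ≤ 2 * Real.exp (C * max a b) := by
      have ha : Real.exp (C*a) ≤ Real.exp (C * max a b) :=
        Real.exp_le_exp.2 (mul_le_mul_of_nonneg_left (le_max_left a b) hC.le)
      have hb : Real.exp (C*b) ≤ Real.exp (C * max a b) :=
        Real.exp_le_exp.2 (mul_le_mul_of_nonneg_left (le_max_right a b) hC.le)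
      linarith
    have hlog : Real.log (Real.exp (C*a) + Real.exp (C*b)) ≤ Real.log 2 + C * max a b := by
      calc Real.log (Real.exp (C*a) + Real.exp (C*b)) ≤ Real.log (2 * Real.exp (C * max a b)) :=
            Real.log_le_log (by positivity) hle
      _ = Real.log 2 + C * max a b := by rw [Real.log_mul (by norm_num) (Real.exp_ne_zero _), Real.log_exp]
    calc (1/C) * Real.log (Real.exp (C*a) + Real.exp (C*b))
        ≤ (1/C) * (Real.log 2 + C * max a b) := mul_le_mul_of_nonneg_left hlog (by positivity)
      _ = max a b + Real.log 2 / C := by field_simp; ring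

/-- Tropicalization of the `B`-coordinate mutation rule of the symplectic double: for a
finite index set `J`, integers `ε j`, reals `b j`, and reals `x`, `b`, the function
`C ↦ (1/C) · log ((exp (C·x)·∏_{ε j > 0} exp (C·εj·bj) + ∏_{ε j < 0} exp (−C·εj·bj)) /
((1 + exp (C·x))·exp (C·b)))` tends to
`max (x + ∑_{ε j > 0} εj·bj) (−∑_{ε j < 0} εj·bj) − max 0 x − b` as `C → +∞`. -/
theorem tropicalization_B_mutation {J : Type*} [Fintype J] (ε : J → ℤ) (b : J → ℝ)
    (x b₀ : ℝ) :
    Tendsto (fun C : ℝ => (1 / C) * Real.log (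
      (Real.exp (C * x) *
        (∏ j ∈ Finset.univ.filter (fun j => 0 < ε j), Real.exp (C * (ε j : ℝ) * b j)) +
       (∏ j ∈ Finset.univ.filter (fun j => ε j < 0), Real.exp (-C * (ε j : ℝ) * b j))) /
      ((1 + Real.exp (C * x)) * Real.exp (C * b₀))))
      atTop
      (nhds (max (x + ∑ j ∈ Finset.univ.filter (fun j => 0 < ε j), (ε j : ℝ) * b j)
        (-∑ j ∈ Finset.univ.filter (fun j => ε j < 0), (ε j : ℝ) * b j)
        - max 0 x - b₀)) := by
  set A := x + ∑ j ∈ Finset.univ.filter (fun j => 0 < ε j), (ε j : ℝ) * b j with hA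
  set B := -∑ j ∈ Finset.univ.filter (fun j => ε j < 0), (ε j : ℝ) * b j with hB
  have hlim : Tendsto (fun C : ℝ => (1/C) * Real.log (Real.exp (C*A) + Real.exp (C*B))
      - (1/C) * Real.log (Real.exp (C*0) + Real.exp (C*x)) - b₀) atTop
      (nhds (max A B - max 0 x - b₀)) :=
    ((aux_max_trop A B).sub (aux_max_trop 0 x)).sub tendsto_const_nhds
  refine hlim.congr' ?_
  filter_upwards [eventually_gt_atTop (0:ℝ)] with C hC
  have hP1 : (∏ j ∈ Finset.univ.filter (fun j => 0 < ε j), Real.exp (C * (ε j : ℝ) * b j))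
      = Real.exp (C * ∑ j ∈ Finset.univ.filter (fun j => 0 < ε j), (ε j : ℝ) * b j) := by
    rw [← Real.exp_sum, Finset.mul_sum]
    congr 1; apply Finset.sum_congr rfl; intros; ring
  have hP2 : (∏ j ∈ Finset.univ.filter (fun j => ε j < 0), Real.exp (-C * (ε j : ℝ) * b j))
      = Real.exp (C * B) := by
    rw [← Real.exp_sum, hB]
    congr 1
    rw [mul_neg, Finset.mul_sum, ← Finset.sum_neg_distrib]
    exact Finset.sum_congr rfl fun _ _ => by ring
  have hnum : Real.exp (C * x) *
        (∏ j ∈ Finset.univ.filter (fun j => 0 < ε j), Real.exp (C * (ε j : ℝ) * b j)) +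
       (∏ j ∈ Finset.univ.filter (fun j => ε j < 0), Real.exp (-C * (ε j : ℝ) * b j))
      = Real.exp (C * A) + Real.exp (C * B) := by
    rw [hP1, hP2, ← Real.exp_add, hA]; ring_nf
  rw [hnum]
  have hden : (0:ℝ) < (1 + Real.exp (C * x)) * Real.exp (C * b₀) := by positivity
  rw [Real.log_div (by positivity) hden.ne',
      Real.log_mul (by positivity) (Real.exp_ne_zero _), Real.log_exp]
  rw [mul_zero, Real.exp_zero] at *
  field_simp
  ring
end

section
/- Let N ≥ 3 be an integer, let p_2, …, p_{N+1} and q_2, …, q_N be positive real numbers, and define r_3 = (q_2·p_4 + q_3·p_2)/p_3 and recursively r_m = (r_{m−1}·p_{m+1} + q_m·p_2)/p_m for m = 4, …, N. Then r_N/(p_2·p_{N+1}) = Σ_{i=2}^{N} q_i/(p_i·p_{i+1}). -/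
/-- Telescoping Ptolemy identity for a fan triangulation around a puncture: with positive
lambda lengths `p 2, …, p (N+1)` and `q 2, …, q N`, and diagonals `r` defined by
`r 3 = (q 2 · p 4 + q 3 · p 2)/p 3` and
`r m = (r (m−1) · p (m+1) + q m · p 2)/p m` for `4 ≤ m ≤ N`, one has
`r N / (p 2 · p (N+1)) = ∑_{i=2}^{N} q i / (p i · p (i+1))`. -/
theorem telescoping_ptolemy (N : ℕ) (hN : 3 ≤ N) (p q r : ℕ → ℝ)
    (hp : ∀ i, 2 ≤ i → i ≤ N + 1 → 0 < p i)
    (hq : ∀ i, 2 ≤ i → i ≤ N → 0 < q i)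
    (hr3 : r 3 = (q 2 * p 4 + q 3 * p 2) / p 3)
    (hr : ∀ m, 4 ≤ m → m ≤ N → r m = (r (m - 1) * p (m + 1) + q m * p 2) / p m) :
    r N / (p 2 * p (N + 1)) = ∑ i ∈ Finset.Icc 2 N, q i / (p i * p (i + 1)) := by
  have key : ∀ m, 3 ≤ m → m ≤ N →
      r m / (p 2 * p (m + 1)) = ∑ i ∈ Finset.Icc 2 m, q i / (p i * p (i + 1)) := by
    intro m hm
    induction m, hm using Nat.le_induction with
    | base =>
      intro h3
      have h2 := hp 2 (by norm_num) (by omega)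
      have h3' := hp 3 (by norm_num) (by omega)
      have h4 := hp 4 (by norm_num) (by omega)
      rw [hr3]
      rw [show Finset.Icc 2 3 = {2, 3} by decide]
      rw [Finset.sum_insert (by decide), Finset.sum_singleton]
      field_simp
    | succ m hm ih =>
      intro hmN
      have ih' := ih (by omega)
      have h2 := hp 2 (by norm_num) (by omega)
      have hpm := hp (m + 1) (by omega) (by omega)
      have hpm2 := hp (m + 2) (by omega) (by omega)
      have hpm1 := hp m (by omega) (by omega)
      have hrm := hr (m + 1) (by omega) hmN
      simp only [Nat.add_sub_cancel] at hrm
      rw [Finset.sum_Icc_succ_top (by omega), ← ih', hrm]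
      field_simp
  exact key N hN le_rfl
end

section
/- Let N ≥ 3 be an integer. Let p_1, …, p_{N+1}, q_1, …, q_N and p°_1, …, p°_{N+1}, q°_1, …, q°_N be positive real numbers. Define r_N from p_2,…,p_{N+1}, q_2,…,q_N by r_3 = (q_2·p_4 + q_3·p_2)/p_3 and r_m = (r_{m−1}·p_{m+1} + q_m·p_2)/p_m for m = 4,…,N, and define r°_N analogously from the p° and q°. Set X = r_N·p_1/(q_1·p_{N+1}) and X̂ = r°_N·p°_1/(q°_1·p°_{N+1}). Then (Σ_{i=1}^{N} q°_i/(p°_i·p°_{i+1})) / (Σ_{i=1}^{N} q_i/(p_i·p_{i+1})) = ((1 + X̂)/(1 + X)) · (q°_1/q_1) · (p_1·p_2)/(p°_1·p°_2). -/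
open Finset

/-! The sum `∑ qᵢ/(pᵢ pᵢ₊₁)` over the fan telescopes through the Ptolemy relations: its terms
from `i = 2` on add up to `r N / (p 2 · p (N+1))`, so the whole sum is `q 1/(p 1 · p 2) · (1 + X)`.
The ratio of the two sums is then a field identity. -/

section Ptolemy

variable {K : Type*} [Field K] {N : ℕ} {p q r : ℕ → K}

theorem sum_Icc_two_eq_ptolemy_diagonal (hN : 3 ≤ N)
    (hp : ∀ i, 2 ≤ i → i ≤ N + 1 → p i ≠ 0)
    (hr3 : r 3 = (q 2 * p 4 + q 3 * p 2) / p 3)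
    (hr : ∀ m, 4 ≤ m → m ≤ N → r m = (r (m - 1) * p (m + 1) + q m * p 2) / p m) :
    ∑ i ∈ Icc 2 N, q i / (p i * p (i + 1)) = r N / (p 2 * p (N + 1)) := by
  induction N, hN using Nat.le_induction with
  | base =>
    have hp2 := hp 2 le_rfl (by omega)
    have hp3 := hp 3 (by omega) (by omega)
    have hp4 := hp 4 (by omega) le_rfl
    rw [show Icc 2 3 = {2, 3} by decide, sum_pair (by decide), hr3]
    field_simp
  | succ N hN ih =>
    have hp2 := hp 2 le_rfl (by omega)
    have hpN := hp (N + 1) (by omega) (by omega)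
    have hpN' := hp (N + 2) (by omega) le_rfl
    have hrN := hr (N + 1) (by omega) le_rfl
    rw [Nat.add_sub_cancel] at hrN
    rw [sum_Icc_succ_top (by omega),
      ih (fun i h₁ h₂ => hp i h₁ (by omega)) fun m h₁ h₂ => hr m h₁ (by omega), hrN]
    field_simp

theorem sum_Icc_one_eq_mul_one_add_cross_ratio (hN : 3 ≤ N)
    (hp : ∀ i, 1 ≤ i → i ≤ N + 1 → p i ≠ 0) (hq1 : q 1 ≠ 0)
    (hr3 : r 3 = (q 2 * p 4 + q 3 * p 2) / p 3)
    (hr : ∀ m, 4 ≤ m → m ≤ N → r m = (r (m - 1) * p (m + 1) + q m * p 2) / p m) :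
    ∑ i ∈ Icc 1 N, q i / (p i * p (i + 1)) =
      q 1 / (p 1 * p 2) * (1 + r N * p 1 / (q 1 * p (N + 1))) := by
  have hp1 := hp 1 le_rfl (by omega)
  have hp2 := hp 2 (by omega) (by omega)
  have hpN := hp (N + 1) (by omega) le_rfl
  rw [← add_sum_Ioc_eq_sum_Icc (by omega), ← Icc_add_one_left_eq_Ioc]
  simp only [Nat.reduceAdd]
  rw [sum_Icc_two_eq_ptolemy_diagonal hN (fun i h₁ h₂ => hp i (by omega) h₂) hr3 hr]
  field_simp

end Ptolemy

/-- The invariant `κ` attached to a puncture is a subtraction-free rational expression in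
the `B`- and `X`-coordinates: with positive lambda lengths `p, q` on `S` and `p°, q°` on
`S°`, diagonals `r`, `r°` defined by the recursive Ptolemy relations, and cross ratios
`X = r N · p 1 / (q 1 · p (N+1))`, `X̂ = r° N · p° 1 / (q° 1 · p° (N+1))`, one has
`(∑ q°ᵢ/(p°ᵢ·p°ᵢ₊₁)) / (∑ qᵢ/(pᵢ·pᵢ₊₁))
  = ((1 + X̂)/(1 + X)) · (q°₁/q₁) · (p₁·p₂)/(p°₁·p°₂)`. -/
theorem kappa_rational (N : ℕ) (hN : 3 ≤ N)
    (p q r po qo ro : ℕ → ℝ)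
    (hp : ∀ i, 1 ≤ i → i ≤ N + 1 → 0 < p i)
    (hq : ∀ i, 1 ≤ i → i ≤ N → 0 < q i)
    (hpo : ∀ i, 1 ≤ i → i ≤ N + 1 → 0 < po i)
    (hqo : ∀ i, 1 ≤ i → i ≤ N → 0 < qo i)
    (hr3 : r 3 = (q 2 * p 4 + q 3 * p 2) / p 3)
    (hr : ∀ m, 4 ≤ m → m ≤ N → r m = (r (m - 1) * p (m + 1) + q m * p 2) / p m)
    (hro3 : ro 3 = (qo 2 * po 4 + qo 3 * po 2) / po 3)
    (hro : ∀ m, 4 ≤ m → m ≤ N → ro m = (ro (m - 1) * po (m + 1) + qo m * po 2) / po m)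
    (X Xhat : ℝ)
    (hX : X = r N * p 1 / (q 1 * p (N + 1)))
    (hXhat : Xhat = ro N * po 1 / (qo 1 * po (N + 1))) :
    (∑ i ∈ Finset.Icc 1 N, qo i / (po i * po (i + 1))) /
      (∑ i ∈ Finset.Icc 1 N, q i / (p i * p (i + 1)))
    = ((1 + Xhat) / (1 + X)) * (qo 1 / q 1) * (p 1 * p 2) / (po 1 * po 2) := by
  rw [sum_Icc_one_eq_mul_one_add_cross_ratio hN (fun i h₁ h₂ => (hp i h₁ h₂).ne')
      (hq 1 le_rfl (by omega)).ne' hr3 hr, ← hX,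
    sum_Icc_one_eq_mul_one_add_cross_ratio hN (fun i h₁ h₂ => (hpo i h₁ h₂).ne')
      (hqo 1 le_rfl (by omega)).ne' hro3 hro, ← hXhat, mul_div_mul_comm, div_div_div_eq]
  ring
end

section
/- Let I be a finite type, let ε be a skew-symmetric I×I integer matrix, let k ∈ I, and let (B_i)_{i∈I} and (X_i)_{i∈I} be positive real numbers. Define X'_k = X_k^{−1} and X'_i = X_i·(1 + X_k^{−sgn(ε_{ik})})^{−ε_{ik}} for i ≠ k; define B'_k = (X_k·∏_{j : ε_{kj}>0} B_j^{ε_{kj}} + ∏_{j : ε_{kj}<0} B_j^{−ε_{kj}}) / ((1 + X_k)·B_k) and B'_i = B_i for i ≠ k; and let ε' be given by ε'_{ij} = −ε_{ij} if k ∈ {i, j} and ε'_{ij} = ε_{ij} + (|ε_{ik}|·ε_{kj} + ε_{ik}·|ε_{kj}|)/2 otherwise. Define (B''_i) and (X''_i) from (B'_i), (X'_i) and ε' by the same mutation formulas at k. Then B''_i = B_i and X''_i = X_i for all i ∈ I. -/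
/-- Mutation of the symplectic double is an involution on positive real points: mutating
the coordinates `(B, X)` twice at the same direction `k` (mutating the skew-symmetric
exchange matrix `ε` alongside) returns the original coordinates. -/
theorem symplectic_double_mutation_involutive {I : Type*} [Fintype I] [DecidableEq I]
    (ε : I → I → ℤ) (hskew : ∀ i j, ε i j = -ε j i) (k : I)
    (B X : I → ℝ) (hB : ∀ i, 0 < B i) (hX : ∀ i, 0 < X i)
    (B' X' : I → ℝ) (ε' : I → I → ℤ)
    (hX'k : X' k = (X k)⁻¹)
    (hX'i : ∀ i, i ≠ k → X' i = X i * (1 + X k ^ (-(ε i k).sign)) ^ (-(ε i k)))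
    (hB'k : B' k =
      (X k * (∏ j ∈ Finset.univ.filter (fun j => 0 < ε k j), B j ^ (ε k j)) +
        ∏ j ∈ Finset.univ.filter (fun j => ε k j < 0), B j ^ (-(ε k j))) /
      ((1 + X k) * B k))
    (hB'i : ∀ i, i ≠ k → B' i = B i)
    (hε' : ∀ i j, ε' i j = if i = k ∨ j = k then -ε i j
      else ε i j + (|ε i k| * ε k j + ε i k * |ε k j|) / 2)
    (B'' X'' : I → ℝ)
    (hX''k : X'' k = (X' k)⁻¹)
    (hX''i : ∀ i, i ≠ k → X'' i = X' i * (1 + X' k ^ (-(ε' i k).sign)) ^ (-(ε' i k)))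
    (hB''k : B'' k =
      (X' k * (∏ j ∈ Finset.univ.filter (fun j => 0 < ε' k j), B' j ^ (ε' k j)) +
        ∏ j ∈ Finset.univ.filter (fun j => ε' k j < 0), B' j ^ (-(ε' k j))) /
      ((1 + X' k) * B' k))
    (hB''i : ∀ i, i ≠ k → B'' i = B' i) :
    (∀ i, B'' i = B i) ∧ (∀ i, X'' i = X i) := by

  have hekk : ε k k = 0 := by have := hskew k k; omega
  have hxk : (0:ℝ) < X k := hX k
  have hε'kj : ∀ j, ε' k j = -ε k j := fun j => by rw [hε']; simp
  have h1 : Finset.univ.filter (fun j => 0 < ε' k j)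
      = Finset.univ.filter (fun j => ε k j < 0) := by
    ext j; simp [hε'kj j]
  have h2 : Finset.univ.filter (fun j => ε' k j < 0)
      = Finset.univ.filter (fun j => 0 < ε k j) := by
    ext j; simp [hε'kj j]
  have hP : (∏ j ∈ Finset.univ.filter (fun j => 0 < ε' k j), B' j ^ (ε' k j))
      = ∏ j ∈ Finset.univ.filter (fun j => ε k j < 0), B j ^ (-(ε k j)) := by
    rw [h1]; refine Finset.prod_congr rfl fun j hj => ?_
    simp only [Finset.mem_filter] at hj
    have hjk : j ≠ k := by rintro rfl; omega
    rw [hB'i j hjk, hε'kj j]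
  have hM : (∏ j ∈ Finset.univ.filter (fun j => ε' k j < 0), B' j ^ (-(ε' k j)))
      = ∏ j ∈ Finset.univ.filter (fun j => 0 < ε k j), B j ^ (ε k j) := by
    rw [h2]; refine Finset.prod_congr rfl fun j hj => ?_
    simp only [Finset.mem_filter] at hj
    have hjk : j ≠ k := by rintro rfl; omega
    rw [hB'i j hjk, hε'kj j, neg_neg]
  constructor
  · intro i
    by_cases hik : i = k
    · rw [hik]
      rw [hB''k, hX'k, hB'k, hP, hM]
      set P := ∏ j ∈ Finset.univ.filter (fun j => 0 < ε k j), B j ^ (ε k j) with hPdef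
      set M := ∏ j ∈ Finset.univ.filter (fun j => ε k j < 0), B j ^ (-(ε k j)) with hMdef
      have hP0 : 0 < P := Finset.prod_pos fun j _ => zpow_pos (hB j) _
      have hM0 : 0 < M := Finset.prod_pos fun j _ => zpow_pos (hB j) _
      have hd1 : X k * P + M ≠ 0 := by positivity
      have hd2 : (1 : ℝ) + X k ≠ 0 := by positivity
      have hBk : B k ≠ 0 := (hB k).ne'
      field_simp
      ring
    · rw [hB''i i hik, hB'i i hik]
  · intro i
    by_cases hik : i = k
    · subst hik; rw [hX''k, hX'k, inv_inv]
    · rw [hX''i i hik, hX'i i hik, hX'k]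
      have he'ik : ε' i k = -(ε i k) := by rw [hε']; simp
      rw [he'ik]
      have hb : ((X k)⁻¹) ^ (-(-(ε i k)).sign) = X k ^ (-(ε i k).sign) := by
        rw [Int.sign_neg, neg_neg, inv_zpow, ← zpow_neg]
      rw [hb, neg_neg]
      have ht : (0:ℝ) < 1 + X k ^ (-(ε i k).sign) := by positivity
      rw [mul_assoc, ← zpow_add₀ ht.ne', neg_add_cancel, zpow_zero, mul_one]
end

section
/- Let I be a finite type, let ε be a skew-symmetric I×I integer matrix, let k ∈ I, and let (b_i)_{i∈I} and (x_i)_{i∈I} be real numbers. Define x'_k = −x_k and x'_i = x_i + ε_{ki}·max(0, sgn(ε_{ki})·x_k) for i ≠ k; define b'_k = max( x_k + Σ_{j : ε_{kj}>0} ε_{kj}·b_j , −Σ_{j : ε_{kj}<0} ε_{kj}·b_j ) − max(0, x_k) − b_k and b'_i = b_i for i ≠ k; and let ε' be given by ε'_{ij} = −ε_{ij} if k ∈ {i, j} and ε'_{ij} = ε_{ij} + (|ε_{ik}|·ε_{kj} + ε_{ik}·|ε_{kj}|)/2 otherwise. Define (b''_i) and (x''_i) from (b'_i), (x'_i) and ε'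 by the same formulas at k. Then b''_i = b_i and x''_i = x_i for all i ∈ I. -/
lemma tropical_aux (t A B c : ℝ) :
    max (-t + -B) A - max 0 (-t) - (max (t + A) (-B) - max 0 t - c) = c := by
  have h1 : max (-t + -B + t) (A + t) = max (-t + -B) A + t := max_add_add_right _ _ _
  have h2 : -t + -B + t = -B := by ring
  have h3 : A + t = t + A := by ring
  rw [h2, h3, max_comm] at h1
  have h4 : max 0 t - max 0 (-t) = t := by
    rcases le_total 0 t with h | h
    · rw [max_eq_right h, max_eq_left (by linarith)]; ring
    · rw [max_eq_left h, max_eq_right (by linarith)]; ring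
  linarith

/-- Tropical mutation of `D`-lamination coordinates is an involution: mutating the
coordinates `(b, x)` twice at the same direction `k` (mutating the skew-symmetric
exchange matrix `ε` alongside) returns the original coordinates. -/
theorem tropical_D_mutation_involutive {I : Type*} [Fintype I] [DecidableEq I]
    (ε : I → I → ℤ) (hskew : ∀ i j, ε i j = -ε j i) (k : I)
    (b x : I → ℝ)
    (b' x' : I → ℝ) (ε' : I → I → ℤ)
    (hx'k : x' k = -x k)
    (hx'i : ∀ i, i ≠ k → x' i = x i + (ε k i : ℝ) * max 0 (((ε k i).sign : ℝ) * x k))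
    (hb'k : b' k =
      max (x k + ∑ j ∈ Finset.univ.filter (fun j => 0 < ε k j), (ε k j : ℝ) * b j)
        (-∑ j ∈ Finset.univ.filter (fun j => ε k j < 0), (ε k j : ℝ) * b j)
      - max 0 (x k) - b k)
    (hb'i : ∀ i, i ≠ k → b' i = b i)
    (hε' : ∀ i j, ε' i j = if i = k ∨ j = k then -ε i j
      else ε i j + (|ε i k| * ε k j + ε i k * |ε k j|) / 2)
    (b'' x'' : I → ℝ)
    (hx''k : x'' k = -x' k)
    (hx''i : ∀ i, i ≠ k → x'' i = x' i + (ε' k i : ℝ) * max 0 (((ε' k i).sign : ℝ) * x' k))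
    (hb''k : b'' k =
      max (x' k + ∑ j ∈ Finset.univ.filter (fun j => 0 < ε' k j), (ε' k j : ℝ) * b' j)
        (-∑ j ∈ Finset.univ.filter (fun j => ε' k j < 0), (ε' k j : ℝ) * b' j)
      - max 0 (x' k) - b' k)
    (hb''i : ∀ i, i ≠ k → b'' i = b' i) :
    (∀ i, b'' i = b i) ∧ (∀ i, x'' i = x i) := by
  have hεkk : ε k k = 0 := by have := hskew k k; omega
  have hε'k : ∀ j, ε' k j = -ε k j := fun j => by simp [hε' k j]
  have hxi : ∀ i, x'' i = x i := by
    intro i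
    by_cases hik : i = k
    · subst hik; rw [hx''k, hx'k, neg_neg]
    · rw [hx''i i hik, hx'i i hik, hx'k, hε'k]
      have hs : (((-ε k i).sign : ℤ) : ℝ) * -x k = (((ε k i).sign : ℤ) : ℝ) * x k := by
        rw [Int.sign_neg]; push_cast; ring
      rw [hs]; push_cast; ring
  refine ⟨?_, hxi⟩
  intro i
  by_cases hik : i = k
  · subst hik
    have hf1 : Finset.univ.filter (fun j => 0 < ε' i j)
        = Finset.univ.filter (fun j => ε i j < 0) := by
      ext j; simp only [Finset.mem_filter, Finset.mem_univ, true_and, hε'k j]; omega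
    have hf2 : Finset.univ.filter (fun j => ε' i j < 0)
        = Finset.univ.filter (fun j => 0 < ε i j) := by
      ext j; simp only [Finset.mem_filter, Finset.mem_univ, true_and, hε'k j]; omega
    have hs1 : ∑ j ∈ Finset.univ.filter (fun j => 0 < ε' i j), (ε' i j : ℝ) * b' j
        = -∑ j ∈ Finset.univ.filter (fun j => ε i j < 0), (ε i j : ℝ) * b j := by
      rw [hf1, ← Finset.sum_neg_distrib]
      refine Finset.sum_congr rfl (fun j hj => ?_)
      simp only [Finset.mem_filter, Finset.mem_univ, true_and] at hj
      have hjk : j ≠ i := fun h => by rw [h, hεkk] at hj; exact absurd hj (by omega)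
      rw [hε'k, hb'i j hjk]; push_cast; ring
    have hs2 : ∑ j ∈ Finset.univ.filter (fun j => ε' i j < 0), (ε' i j : ℝ) * b' j
        = -∑ j ∈ Finset.univ.filter (fun j => 0 < ε i j), (ε i j : ℝ) * b j := by
      rw [hf2, ← Finset.sum_neg_distrib]
      refine Finset.sum_congr rfl (fun j hj => ?_)
      simp only [Finset.mem_filter, Finset.mem_univ, true_and] at hj
      have hjk : j ≠ i := fun h => by rw [h, hεkk] at hj; exact absurd hj (by omega)
      rw [hε'k, hb'i j hjk]; push_cast; ring
    rw [hb''k, hs1, hs2, hx'k, hb'k, neg_neg]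
    exact tropical_aux (x i) _ _ (b i)
  · rw [hb''i i hik, hb'i i hik]
end

section
/- Let I be a finite type, let ε be a skew-symmetric I×I integer matrix, let (A_i)_{i∈I} be positive real numbers, and set X_i = ∏_{j∈I} A_j^{ε_{ij}}. Fix k ∈ I and define A'_k = A_k^{−1}·( ∏_{j : ε_{kj}>0} A_j^{ε_{kj}} + ∏_{j : ε_{kj}<0} A_j^{−ε_{kj}} ) and A'_i = A_i for i ≠ k; let ε' be given by ε'_{ij} = −ε_{ij} if k ∈ {i, j} and ε'_{ij} = ε_{ij} + (|ε_{ik}|·ε_{kj} + ε_{ik}·|ε_{kj}|)/2 otherwise; and set X'_i = ∏_{j∈I} (A'_j)^{ε'_{ij}}. Then X'_k = X_k^{−1}, and X'_i = X_i·(1 + X_k^{−sgn(ε_{ik})})^{−ε_{ik}} for every i ≠ k. -/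
/-- The canonical map `p : 𝒜 → 𝒳`, given by `p*(Xᵢ) = ∏ⱼ Aⱼ^{εᵢⱼ}`, intertwines the
`A`-coordinate mutation with the `X`-coordinate mutation: if `X` is obtained from the
positive reals `A` via `ε`, `A'` is the mutation of `A` at `k`, `ε'` the mutated exchange
matrix, and `X'` is obtained from `A'` via `ε'`, then `X' k = (X k)⁻¹` and
`X' i = X i · (1 + X k^{−sgn(ε i k)})^{−ε i k}` for `i ≠ k`. -/
theorem canonical_map_commutes_with_mutation {I : Type*} [Fintype I] [DecidableEq I]
    (ε : I → I → ℤ) (hskew : ∀ i j, ε i j = -ε j i)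
    (A : I → ℝ) (hA : ∀ i, 0 < A i)
    (X : I → ℝ) (hX : ∀ i, X i = ∏ j, A j ^ (ε i j))
    (k : I) (A' : I → ℝ) (ε' : I → I → ℤ) (X' : I → ℝ)
    (hA'k : A' k = (A k)⁻¹ *
      ((∏ j ∈ Finset.univ.filter (fun j => 0 < ε k j), A j ^ (ε k j)) +
        ∏ j ∈ Finset.univ.filter (fun j => ε k j < 0), A j ^ (-(ε k j))))
    (hA'i : ∀ i, i ≠ k → A' i = A i)
    (hε' : ∀ i j, ε' i j = if i = k ∨ j = k then -ε i j
      else ε i j + (|ε i k| * ε k j + ε i k * |ε k j|) / 2)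
    (hX' : ∀ i, X' i = ∏ j, A' j ^ (ε' i j)) :
    X' k = (X k)⁻¹ ∧
    ∀ i, i ≠ k → X' i = X i * (1 + X k ^ (-(ε i k).sign)) ^ (-(ε i k)) := by
  have hεkk : ε k k = 0 := by have := hskew k k; omega
  set P := ∏ j ∈ Finset.univ.filter (fun j => 0 < ε k j), A j ^ (ε k j) with hPdef
  set N := ∏ j ∈ Finset.univ.filter (fun j => ε k j < 0), A j ^ (-(ε k j)) with hNdef
  have hAne : ∀ j, A j ≠ 0 := fun j => (hA j).ne'
  have hP : 0 < P := Finset.prod_pos (fun j _ => zpow_pos (hA j) _)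
  have hN : 0 < N := Finset.prod_pos (fun j _ => zpow_pos (hA j) _)
  have hXk : X k = P * N⁻¹ := by
    rw [hX k,
      ← Finset.prod_filter_mul_prod_filter_not Finset.univ (fun j => 0 < ε k j)]
    congr 1
    have h1 : ∏ j ∈ Finset.univ.filter (fun j => ¬ 0 < ε k j), A j ^ (ε k j)
        = ∏ j ∈ Finset.univ.filter (fun j => ε k j < 0), A j ^ (ε k j) := by
      refine (Finset.prod_subset ?_ ?_).symm
      · intro j hj; simp only [Finset.mem_filter, Finset.mem_univ, true_and] at hj ⊢; omega
      · intro j hj hj2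
        simp only [Finset.mem_filter, Finset.mem_univ, true_and] at hj hj2
        have : ε k j = 0 := by omega
        rw [this, zpow_zero]
    rw [h1, hNdef, ← Finset.prod_inv_distrib]
    refine Finset.prod_congr rfl fun j _ => ?_
    rw [← zpow_neg, neg_neg]
  constructor
  · rw [hX' k, hX k, ← Finset.prod_inv_distrib]
    refine Finset.prod_congr rfl fun j _ => ?_
    rw [hε' k j, if_pos (Or.inl rfl)]
    by_cases hj : j = k
    · subst hj; rw [hεkk]; simp
    · rw [hA'i j hj, zpow_neg]
  · intro i hi
    set Q := ∏ j ∈ Finset.univ.erase k, A j ^ (ε i j) with hQdef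
    have hXi : X i = A k ^ (ε i k) * Q := by
      rw [hX i, ← Finset.mul_prod_erase Finset.univ _ (Finset.mem_univ k)]
    have hX'i : X' i = A' k ^ (-(ε i k)) *
        (Q * ∏ j ∈ Finset.univ.erase k,
          A j ^ ((|ε i k| * ε k j + ε i k * |ε k j|) / 2)) := by
      rw [hX' i, ← Finset.mul_prod_erase Finset.univ _ (Finset.mem_univ k),
        hε' i k, if_pos (Or.inr rfl), hQdef, ← Finset.prod_mul_distrib]
      congr 1
      refine Finset.prod_congr rfl fun j hj => ?_
      have hj' : j ≠ k := Finset.ne_of_mem_erase hj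
      rw [hε' i j, if_neg (not_or.mpr ⟨hi, hj'⟩), hA'i j hj', zpow_add₀ (hAne j)]
    have hA'kpow : A' k ^ (-(ε i k)) = A k ^ (ε i k) * (P + N) ^ (-(ε i k)) := by
      rw [hA'k, mul_zpow, inv_zpow, ← zpow_neg, neg_neg]
    rcases lt_trichotomy (ε i k) 0 with ha | ha | ha
    · -- negative case
      have hc : ∀ j, (|ε i k| * ε k j + ε i k * |ε k j|) / 2
          = ε i k * max (-(ε k j)) 0 := by
        intro j
        rcases lt_trichotomy (ε k j) 0 with h | h | h
        · rw [abs_of_neg ha, abs_of_neg h, max_eq_left (by omega)]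
          have : -ε i k * ε k j + ε i k * -ε k j = 2 * (ε i k * -ε k j) := by ring
          rw [this, Int.mul_ediv_cancel_left _ two_ne_zero]
        · rw [h]; simp
        · rw [abs_of_neg ha, abs_of_pos h, max_eq_right (by omega)]
          have : -ε i k * ε k j + ε i k * ε k j = 0 := by ring
          rw [this]; simp
      have hprodN : ∏ j ∈ Finset.univ.erase k, A j ^ (max (-(ε k j)) 0) = N := by
        rw [hNdef]
        refine (Finset.prod_subset ?_ ?_).symm.trans
          (Finset.prod_congr rfl fun j hj => ?_)
        · intro j hj
          simp only [Finset.mem_filter, Finset.mem_univ, true_and] at hj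
          simp only [Finset.mem_erase, Finset.mem_univ, and_true]
          intro h; rw [h, hεkk] at hj; omega
        · intro j _ hj2
          simp only [Finset.mem_filter, Finset.mem_univ, true_and] at hj2
          rw [max_eq_right (by omega), zpow_zero]
        · simp only [Finset.mem_filter, Finset.mem_univ, true_and] at hj
          rw [max_eq_left (by omega)]
      have hsign : (ε i k).sign = -1 := Int.sign_eq_neg_one_iff_neg.mpr ha
      have hexp : ∏ j ∈ Finset.univ.erase k,
          A j ^ ((|ε i k| * ε k j + ε i k * |ε k j|) / 2) = N ^ (ε i k) := by
        rw [← hprodN, ← Finset.prod_zpow]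
        refine Finset.prod_congr rfl fun j _ => ?_
        rw [hc j, mul_comm, zpow_mul]
      have h1Xk : 1 + X k = (P + N) * N⁻¹ := by
        rw [hXk]; field_simp; ring
      rw [hX'i, hexp, hA'kpow, hXi, hsign, hXk]
      rw [neg_neg, zpow_one, ← hXk, h1Xk, mul_zpow, inv_zpow, ← zpow_neg, neg_neg]
      ring
    · -- zero case
      rw [hX'i, hXi, ha]
      simp
    · -- positive case
      have hc : ∀ j, (|ε i k| * ε k j + ε i k * |ε k j|) / 2
          = ε i k * max (ε k j) 0 := by
        intro j
        rcases lt_trichotomy (ε k j) 0 with h | h | h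
        · rw [abs_of_pos ha, abs_of_neg h, max_eq_right (by omega)]
          have : ε i k * ε k j + ε i k * -ε k j = 0 := by ring
          rw [this]; simp
        · rw [h]; simp
        · rw [abs_of_pos ha, abs_of_pos h, max_eq_left (by omega)]
          have : ε i k * ε k j + ε i k * ε k j = 2 * (ε i k * ε k j) := by ring
          rw [this, Int.mul_ediv_cancel_left _ two_ne_zero]
      have hprodP : ∏ j ∈ Finset.univ.erase k, A j ^ (max (ε k j) 0) = P := by
        rw [hPdef]
        refine (Finset.prod_subset ?_ ?_).symm.trans
          (Finset.prod_congr rfl fun j hj => ?_)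
        · intro j hj
          simp only [Finset.mem_filter, Finset.mem_univ, true_and] at hj
          simp only [Finset.mem_erase, Finset.mem_univ, and_true]
          intro h; rw [h, hεkk] at hj; omega
        · intro j _ hj2
          simp only [Finset.mem_filter, Finset.mem_univ, true_and] at hj2
          rw [max_eq_right (by omega), zpow_zero]
        · simp only [Finset.mem_filter, Finset.mem_univ, true_and] at hj
          rw [max_eq_left (by omega)]
      have hsign : (ε i k).sign = 1 := Int.sign_eq_one_iff_pos.mpr ha
      have hexp : ∏ j ∈ Finset.univ.erase k,
          A j ^ ((|ε i k| * ε k j + ε i k * |ε k j|) / 2) = P ^ (ε i k) := by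
        rw [← hprodP, ← Finset.prod_zpow]
        refine Finset.prod_congr rfl fun j _ => ?_
        rw [hc j, mul_comm, zpow_mul]
      have h1Xk : 1 + X k ^ (-1 : ℤ) = (P + N) * P⁻¹ := by
        rw [hXk]; field_simp
      rw [hX'i, hexp, hA'kpow, hXi, hsign, h1Xk, mul_zpow, inv_zpow, ← zpow_neg,
        neg_neg]
      ring
end

section
/- Let I be a finite type, let ε be a skew-symmetric I×I integer matrix, let (a_i)_{i∈I} be real numbers, and set x_i = Σ_{j∈I} ε_{ij}·a_j. Fix k ∈ I and define a'_k = max( Σ_{j : ε_{kj}>0} ε_{kj}·a_j , −Σ_{j : ε_{kj}<0} ε_{kj}·a_j ) − a_k and a'_i = a_i for i ≠ k; let ε' be given by ε'_{ij} = −ε_{ij} if k ∈ {i, j} and ε'_{ij} = ε_{ij} + (|ε_{ik}|·ε_{kj} + ε_{ik}·|ε_{kj}|)/2 otherwise; and set x'_i = Σ_{j∈I} ε'_{ij}·a'_j. Then x'_k = −x_k, and x'_i = x_i + ε_{ki}·max(0, sgn(ε_{ki})·x_k) for every i ≠ k. -/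
private lemma aux_div_pos (m n : ℤ) (hm : 0 < m) :
    (|m| * n + m * |n|) / 2 = if 0 < n then m * n else 0 := by
  rcases lt_trichotomy n 0 with hn | hn | hn
  · rw [abs_of_pos hm, abs_of_neg hn, if_neg (by omega)]
    have h : m * n + m * -n = 0 := by ring
    rw [h]; simp
  · subst hn; simp
  · rw [abs_of_pos hm, abs_of_pos hn, if_pos hn]
    have h : m * n + m * n = m * n * 2 := by ring
    rw [h, Int.mul_ediv_cancel _ (by norm_num)]

private lemma aux_div_neg (m n : ℤ) (hm : m < 0) :
    (|m| * n + m * |n|) / 2 = if n < 0 then -(m * n) else 0 := by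
  rcases lt_trichotomy n 0 with hn | hn | hn
  · rw [abs_of_neg hm, abs_of_neg hn, if_pos hn]
    have h : -m * n + m * -n = -(m * n) * 2 := by ring
    rw [h, Int.mul_ediv_cancel _ (by norm_num)]
  · subst hn; simp
  · rw [abs_of_neg hm, abs_of_pos hn, if_neg (by omega)]
    have h : -m * n + m * n = 0 := by ring
    rw [h]; simp

/-- The canonical map `p : 𝒜_L → 𝒳_L`, given by `p*(xᵢ) = ∑ⱼ εᵢⱼ·aⱼ`, intertwines the
tropical `A`-mutation with the tropical `X`-mutation: if `x` is obtained from the reals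
`a` via `ε`, `a'` is the tropical mutation of `a` at `k`, `ε'` the mutated exchange
matrix, and `x'` is obtained from `a'` via `ε'`, then `x' k = −x k` and
`x' i = x i + ε k i · max 0 (sgn(ε k i)·x k)` for `i ≠ k`. -/
theorem tropical_canonical_map_commutes_with_mutation {I : Type*} [Fintype I]
    [DecidableEq I]
    (ε : I → I → ℤ) (hskew : ∀ i j, ε i j = -ε j i)
    (a : I → ℝ)
    (x : I → ℝ) (hx : ∀ i, x i = ∑ j, (ε i j : ℝ) * a j)
    (k : I) (a' : I → ℝ) (ε' : I → I → ℤ) (x' : I → ℝ)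
    (ha'k : a' k =
      max (∑ j ∈ Finset.univ.filter (fun j => 0 < ε k j), (ε k j : ℝ) * a j)
        (-∑ j ∈ Finset.univ.filter (fun j => ε k j < 0), (ε k j : ℝ) * a j) - a k)
    (ha'i : ∀ i, i ≠ k → a' i = a i)
    (hε' : ∀ i j, ε' i j = if i = k ∨ j = k then -ε i j
      else ε i j + (|ε i k| * ε k j + ε i k * |ε k j|) / 2)
    (hx' : ∀ i, x' i = ∑ j, (ε' i j : ℝ) * a' j) :
    x' k = -x k ∧
    ∀ i, i ≠ k → x' i = x i + (ε k i : ℝ) * max 0 (((ε k i).sign : ℝ) * x k) := by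
  have hkk : ε k k = 0 := by have := hskew k k; omega
  set P : ℝ := ∑ j ∈ Finset.univ.filter (fun j => 0 < ε k j), (ε k j : ℝ) * a j with hP
  set N : ℝ := ∑ j ∈ Finset.univ.filter (fun j => ε k j < 0), (ε k j : ℝ) * a j with hN
  have hPN : x k = P + N := by
    rw [hx k, ← Finset.sum_filter_add_sum_filter_not Finset.univ (fun j => 0 < ε k j)
      (fun j => (ε k j : ℝ) * a j)]
    congr 1
    refine (Finset.sum_subset ?_ ?_).symm
    · intro j hj
      simp only [Finset.mem_filter, Finset.mem_univ, true_and] at hj ⊢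
      omega
    · intro j hj hj'
      simp only [Finset.mem_filter, Finset.mem_univ, true_and] at hj hj'
      have : ε k j = 0 := by omega
      rw [this]; simp
  constructor
  · rw [hx' k, hx k, ← Finset.sum_neg_distrib]
    refine Finset.sum_congr rfl fun j _ => ?_
    rw [hε' k j, if_pos (Or.inl rfl)]
    by_cases hj : j = k
    · subst hj; rw [hkk]; simp
    · rw [ha'i j hj]; push_cast; ring
  · intro i hik
    rcases lt_trichotomy (ε i k) 0 with hc | hc | hc
    · -- ε i k < 0, so ε k i > 0, sign = 1
      have hki : ε k i = -ε i k := by have := hskew i k; omega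
      have hkipos : 0 < ε k i := by omega
      have hsign : (ε k i).sign = 1 := Int.sign_eq_one_of_pos hkipos
      have key : ∀ j, (ε' i j : ℝ) * a' j =
          (ε i j : ℝ) * a j
          + (if ε k j < 0 then -(ε i k : ℝ) * ((ε k j : ℝ) * a j) else 0)
          + (if j = k then -(ε i k : ℝ) * a' k - (ε i k : ℝ) * a k else 0) := by
        intro j
        by_cases hj : j = k
        · rw [hj, hε' i k, if_pos (Or.inr rfl), if_pos rfl, if_neg (by omega)]
          push_cast; ring
        · rw [hε' i j, if_neg (by push_neg; exact ⟨hik, hj⟩), ha'i j hj, if_neg hj,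
            aux_div_neg _ _ hc]
          by_cases hn : ε k j < 0
          · rw [if_pos hn, if_pos hn]; push_cast; ring
          · rw [if_neg hn, if_neg hn]; push_cast; ring
      have hsum : x' i = (∑ j, (ε i j : ℝ) * a j)
          + (∑ j, if ε k j < 0 then -(ε i k : ℝ) * ((ε k j : ℝ) * a j) else 0)
          + (∑ j, if j = k then -(ε i k : ℝ) * a' k - (ε i k : ℝ) * a k else 0) := by
        rw [hx' i, ← Finset.sum_add_distrib, ← Finset.sum_add_distrib]
        exact Finset.sum_congr rfl fun j _ => key j
      have h2 : (∑ j, if ε k j < 0 then -(ε i k : ℝ) * ((ε k j : ℝ) * a j) else 0)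
          = -(ε i k : ℝ) * N := by
        rw [hN, Finset.mul_sum, Finset.sum_filter]
      have h3 : (∑ j, if j = k then -(ε i k : ℝ) * a' k - (ε i k : ℝ) * a k else 0)
          = -(ε i k : ℝ) * a' k - (ε i k : ℝ) * a k := by
        rw [Finset.sum_ite_eq' Finset.univ k
          (fun _ => -(ε i k : ℝ) * a' k - (ε i k : ℝ) * a k)]
        simp
      rw [hsum, h2, h3, ← hx i, ha'k, hsign, hki, hPN]
      push_cast
      rcases le_total P (-N) with h | h
      · rw [max_eq_right h, max_eq_left (by linarith)]
        ring
      · rw [max_eq_left h, max_eq_right (by linarith)]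
        ring
    · -- ε i k = 0
      have hki : ε k i = 0 := by have := hskew i k; omega
      have key : ∀ j, (ε' i j : ℝ) * a' j = (ε i j : ℝ) * a j := by
        intro j
        by_cases hj : j = k
        · rw [hj, hε' i k, if_pos (Or.inr rfl), hc]
          simp
        · rw [hε' i j, if_neg (by push_neg; exact ⟨hik, hj⟩), ha'i j hj, hc]
          simp
      have hsum : x' i = ∑ j, (ε i j : ℝ) * a j := by
        rw [hx' i]; exact Finset.sum_congr rfl fun j _ => key j
      rw [hsum, ← hx i, hki]
      norm_num
    · -- ε i k > 0, so ε k i < 0, sign = -1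
      have hki : ε k i = -ε i k := by have := hskew i k; omega
      have hkineg : ε k i < 0 := by omega
      have hsign : (ε k i).sign = -1 := Int.sign_eq_neg_one_of_neg hkineg
      have key : ∀ j, (ε' i j : ℝ) * a' j =
          (ε i j : ℝ) * a j
          + (if 0 < ε k j then (ε i k : ℝ) * ((ε k j : ℝ) * a j) else 0)
          + (if j = k then -(ε i k : ℝ) * a' k - (ε i k : ℝ) * a k else 0) := by
        intro j
        by_cases hj : j = k
        · rw [hj, hε' i k, if_pos (Or.inr rfl), if_pos rfl, if_neg (by omega)]
          push_cast; ring
        · rw [hε' i j, if_neg (by push_neg; exact ⟨hik, hj⟩), ha'i j hj, if_neg hj,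
            aux_div_pos _ _ hc]
          by_cases hn : 0 < ε k j
          · rw [if_pos hn, if_pos hn]; push_cast; ring
          · rw [if_neg hn, if_neg hn]; push_cast; ring
      have hsum : x' i = (∑ j, (ε i j : ℝ) * a j)
          + (∑ j, if 0 < ε k j then (ε i k : ℝ) * ((ε k j : ℝ) * a j) else 0)
          + (∑ j, if j = k then -(ε i k : ℝ) * a' k - (ε i k : ℝ) * a k else 0) := by
        rw [hx' i, ← Finset.sum_add_distrib, ← Finset.sum_add_distrib]
        exact Finset.sum_congr rfl fun j _ => key j
      have h2 : (∑ j, if 0 < ε k j then (ε i k : ℝ) * ((ε k j : ℝ) * a j) else 0)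
          = (ε i k : ℝ) * P := by
        rw [hP, Finset.mul_sum, Finset.sum_filter]
      have h3 : (∑ j, if j = k then -(ε i k : ℝ) * a' k - (ε i k : ℝ) * a k else 0)
          = -(ε i k : ℝ) * a' k - (ε i k : ℝ) * a k := by
        rw [Finset.sum_ite_eq' Finset.univ k
          (fun _ => -(ε i k : ℝ) * a' k - (ε i k : ℝ) * a k)]
        simp
      rw [hsum, h2, h3, ← hx i, ha'k, hsign, hki, hPN]
      push_cast
      rcases le_total P (-N) with h | h
      · rw [max_eq_right h, max_eq_right (by linarith)]
        ring
      · rw [max_eq_left h, max_eq_left (by linarith)]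
        ring
end
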